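/- arXiv:1406.7758 — 7 statements merged into one kernel-verified Lean document; each statement's English description precedes it below -/
import Mathlib

section
/- Let K be a T×T real symmetric positive definite matrix, f ∈ ℝ^T and σ > 0. Then fᵀ (K + σ² I)^{−2} f ≤ σ^{−2} fᵀ K^{−1} f. -/
/-!
Put `M = K + σ² I` and `g = M⁻¹ f`. As `M⁻¹` is symmetric, `fᵀ M⁻² f = gᵀ g`, while
`fᵀ K⁻¹ f = gᵀ (M K⁻¹ M) g = gᵀ K g + 2σ² gᵀ g + σ⁴ gᵀ K⁻¹ g ≥ 2σ² gᵀ g`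
because `K` and `K⁻¹` are positive definite.
-/

open Matrix

namespace Matrix

variable {n : Type*} [Fintype n]

theorem IsSymm.mulVec_dotProduct_mulVec_mulVec {R : Type*} [CommSemiring R] {A : Matrix n n R}
    (hA : A.IsSymm) (B : Matrix n n R) (g : n → R) :
    A *ᵥ g ⬝ᵥ B *ᵥ (A *ᵥ g) = g ⬝ᵥ (A * B * A) *ᵥ g := by
  have hgA : g ᵥ* A = A *ᵥ g := by simpa only [hA.eq] using vecMul_transpose A g
  rw [← mulVec_mulVec, ← mulVec_mulVec, dotProduct_mulVec g A, hgA]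

variable [DecidableEq n]

theorem add_smul_one_mul_inv_mul {R : Type*} [CommRing R] {K : Matrix n n R}
    (hK : IsUnit K.det) (s : R) :
    (K + s • 1) * K⁻¹ * (K + s • 1) = K + (2 * s) • 1 + s ^ 2 • K⁻¹ := by
  simp only [add_mul, mul_add, Matrix.smul_mul, Matrix.mul_smul, mul_nonsing_inv K hK,
    nonsing_inv_mul K hK, one_mul, mul_one, smul_smul]
  match_scalars <;> ring

theorem PosDef.two_mul_dotProduct_self_le {K : Matrix n n ℝ} (hK : K.PosDef) (s : ℝ) (g : n → ℝ) :
    2 * s * (g ⬝ᵥ g) ≤ (K + s • 1) *ᵥ g ⬝ᵥ K⁻¹ *ᵥ ((K + s • 1) *ᵥ g) := by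
  have hM : (K + s • 1).IsSymm :=
    (isHermitian_iff_isSymm.mp hK.isHermitian).add (isSymm_one.smul s)
  rw [hM.mulVec_dotProduct_mulVec_mulVec, add_smul_one_mul_inv_mul hK.det_pos.ne'.isUnit]
  have hKg : 0 ≤ g ⬝ᵥ K *ᵥ g := by simpa using hK.posSemidef.dotProduct_mulVec_nonneg g
  have hKinvg : 0 ≤ g ⬝ᵥ K⁻¹ *ᵥ g := by simpa using hK.inv.posSemidef.dotProduct_mulVec_nonneg g
  simp only [add_mulVec, smul_mulVec, one_mulVec, dotProduct_add, dotProduct_smul, smul_eq_mul]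
  nlinarith [sq_nonneg s]

end Matrix

/-- For a symmetric positive definite `K`, `f ∈ ℝ^T`, `σ > 0`:
`fᵀ (K + σ²I)⁻² f ≤ σ⁻² fᵀ K⁻¹ f`. -/
theorem quadratic_form_inv_sq_bound
    (T : ℕ) (K : Matrix (Fin T) (Fin T) ℝ) (hK : K.PosDef)
    (f : Fin T → ℝ) (σ : ℝ) (hσ : 0 < σ) :
    f ⬝ᵥ (((K + σ ^ 2 • 1)⁻¹) ^ 2).mulVec f ≤ (σ ^ 2)⁻¹ * (f ⬝ᵥ K⁻¹.mulVec f) := by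
  have hs : 0 < σ ^ 2 := by positivity
  have hM : (K + σ ^ 2 • 1).PosDef := hK.add (PosDef.one.smul hs)
  have hMinv : (K + σ ^ 2 • 1)⁻¹.IsSymm := isHermitian_iff_isSymm.mp hM.inv.isHermitian
  set g := (K + σ ^ 2 • 1)⁻¹ *ᵥ f
  have hf : (K + σ ^ 2 • 1) *ᵥ g = f := by
    rw [mulVec_mulVec, mul_nonsing_inv _ hM.det_pos.ne'.isUnit, one_mulVec]
  have hlhs : f ⬝ᵥ ((K + σ ^ 2 • 1)⁻¹ ^ 2) *ᵥ f = g ⬝ᵥ g := by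
    have h := hMinv.mulVec_dotProduct_mulVec_mulVec 1 f
    rwa [one_mulVec, mul_one, ← sq, eq_comm] at h
  have hg : 0 ≤ g ⬝ᵥ g := by simpa using dotProduct_self_star_nonneg g
  have key := hK.two_mul_dotProduct_self_le (σ ^ 2) g
  rw [hf] at key
  rw [hlhs, le_inv_mul_iff₀ hs]
  linarith [mul_nonneg hs.le hg]
end

section
/- Let K be a T×T real symmetric positive definite matrix, f ∈ ℝ^T, σ > 0, and let ε_1, …, ε_T be independent real-valued random variables, each σ-sub-Gaussian. Then the random variable fᵀ (K + σ² I)^{−1} ε, where ε = (ε_1, …, ε_T), is η-sub-Gaussian with η = (fᵀ K^{−1} f)^{1/2}; that is, E[exp(ρ fᵀ (K + σ² I)^{−1} ε)] ≤ exp(ρ² (fᵀ K^{−1} f) / 2) for all ρ ∈ ℝ. -/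
/-!
Write `M = K + σ² I` and `c = M⁻¹ f`. Since `M` is symmetric,
`fᵀ M⁻¹ ε = ∑ₜ cₜ εₜ`, and by independence its moment generating function is at most
`exp (ρ² σ² ‖c‖² / 2)`. It remains to see `σ² ‖c‖² ≤ fᵀ K⁻¹ f`: substituting `f = K c + σ² c`
gives `fᵀ K⁻¹ f = cᵀ K c + 2 σ² ‖c‖² + σ⁴ cᵀ K⁻¹ c`, and the outer terms are nonnegative.
-/

open MeasureTheory Real Matrix ProbabilityTheory

namespace Matrix

lemma IsHermitian.dotProduct_mulVec_comm {n : Type*} [Fintype n] {A : Matrix n n ℝ}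
    (hA : A.IsHermitian) (v w : n → ℝ) :
    v ⬝ᵥ A *ᵥ w = A *ᵥ v ⬝ᵥ w := by
  rw [dotProduct_mulVec, ← mulVec_transpose, ← conjTranspose_eq_transpose_of_trivial, hA.eq]

lemma PosDef.add_smul_one {n : Type*} [DecidableEq n] {K : Matrix n n ℝ} (hK : K.PosDef)
    {s : ℝ} (hs : 0 ≤ s) :
    (K + s • 1).PosDef :=
  hK.add_posSemidef (PosSemidef.one.smul hs)

lemma PosDef.mul_dotProduct_self_inv_add_smul_one_mulVec_le {n : Type*} [Fintype n]
    [DecidableEq n] {K : Matrix n n ℝ} (hK : K.PosDef) {s : ℝ} (hs : 0 ≤ s) (f : n → ℝ) :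
    s * ((K + s • 1)⁻¹ *ᵥ f ⬝ᵥ (K + s • 1)⁻¹ *ᵥ f) ≤ f ⬝ᵥ K⁻¹ *ᵥ f := by
  set c := (K + s • 1)⁻¹ *ᵥ f
  have hKunit : IsUnit K.det := (isUnit_iff_isUnit_det K).mp hK.isUnit
  have hf : f = K *ᵥ c + s • c := by
    have hMc : (K + s • 1) *ᵥ c = f := by
      rw [mulVec_mulVec,
        mul_nonsing_inv _ ((isUnit_iff_isUnit_det _).mp (hK.add_smul_one hs).isUnit), one_mulVec]
    rw [← hMc, add_mulVec, smul_mulVec, one_mulVec]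
  have hKinv_f : K⁻¹ *ᵥ f = c + s • K⁻¹ *ᵥ c := by
    rw [hf, mulVec_add, mulVec_mulVec, nonsing_inv_mul _ hKunit, one_mulVec, mulVec_smul]
  have hcross : K *ᵥ c ⬝ᵥ K⁻¹ *ᵥ c = c ⬝ᵥ c := by
    rw [hK.isHermitian.inv.dotProduct_mulVec_comm, mulVec_mulVec, nonsing_inv_mul _ hKunit,
      one_mulVec]
  have hexpand : f ⬝ᵥ K⁻¹ *ᵥ f
      = c ⬝ᵥ K *ᵥ c + 2 * s * (c ⬝ᵥ c) + s ^ 2 * (c ⬝ᵥ K⁻¹ *ᵥ c) := by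
    rw [hKinv_f]
    nth_rw 1 [hf]
    simp only [add_dotProduct, dotProduct_add, smul_dotProduct, dotProduct_smul, smul_eq_mul,
      hcross, dotProduct_comm (K *ᵥ c) c]
    ring
  have hKc := hK.posSemidef.dotProduct_mulVec_nonneg c
  have hKinvc := hK.inv.posSemidef.dotProduct_mulVec_nonneg c
  have hcc : 0 ≤ c ⬝ᵥ c := by simpa using dotProduct_star_self_nonneg c
  simp only [star_trivial] at hKc hKinvc
  linarith [mul_nonneg hs hcc, mul_nonneg (sq_nonneg s) hKinvc]

end Matrix

lemma ProbabilityTheory.iIndepFun.mgf_dotProduct_le {Ω ι : Type*} [MeasurableSpace Ω]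
    [Fintype ι] {P : Measure Ω} {ε : ι → Ω → ℝ} (hindep : iIndepFun ε P)
    (hmeas : ∀ i, Measurable (ε i)) {σ : ℝ}
    (hsub : ∀ i ρ, mgf (ε i) P ρ ≤ exp (ρ ^ 2 * σ ^ 2 / 2)) (c : ι → ℝ) (ρ : ℝ) :
    mgf (fun ω => c ⬝ᵥ fun i => ε i ω) P ρ ≤ exp (ρ ^ 2 * (σ ^ 2 * (c ⬝ᵥ c)) / 2) := by
  have hsum : (fun ω => c ⬝ᵥ fun i => ε i ω) = ∑ i, fun ω => c i * ε i ω := by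
    ext ω
    simp [dotProduct, Finset.sum_apply]
  have hindep' : iIndepFun (fun i ω => c i * ε i ω) P :=
    hindep.comp (fun i x => c i * x) fun i => measurable_const_mul (c i)
  rw [hsum, hindep'.mgf_sum (fun i => (hmeas i).const_mul (c i))]
  calc ∏ i, mgf (fun ω => c i * ε i ω) P ρ
      ≤ ∏ i, exp ((c i * ρ) ^ 2 * σ ^ 2 / 2) :=
        Finset.prod_le_prod (fun _ _ => mgf_nonneg) fun i _ => mgf_const_mul (c i) ▸ hsub i _
    _ = exp (ρ ^ 2 * (σ ^ 2 * (c ⬝ᵥ c)) / 2) := by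
        rw [← exp_sum]
        congr 1
        simp only [dotProduct, Finset.mul_sum, Finset.sum_div]
        exact Finset.sum_congr rfl fun i _ => by ring

theorem subGaussian_quadratic_smoothed_general
    {Ω : Type*} [MeasurableSpace Ω] (P : Measure Ω)
    (T : ℕ) (K : Matrix (Fin T) (Fin T) ℝ) (hK : K.PosDef)
    (f : Fin T → ℝ) (σ : ℝ)
    (ε : Fin T → Ω → ℝ) (hmeas : ∀ t, Measurable (ε t))
    (hindep : iIndepFun ε P)
    (hsub : ∀ t, ∀ ρ : ℝ, ∫ ω, Real.exp (ρ * ε t ω) ∂P ≤ Real.exp (ρ ^ 2 * σ ^ 2 / 2)) :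
    ∀ ρ : ℝ, ∫ ω, Real.exp (ρ * (f ⬝ᵥ (K + σ ^ 2 • 1)⁻¹.mulVec (fun t => ε t ω))) ∂P ≤
      Real.exp (ρ ^ 2 * (f ⬝ᵥ K⁻¹.mulVec f) / 2) := by
  intro ρ
  have hM := hK.add_smul_one (sq_nonneg σ)
  set c := (K + σ ^ 2 • 1)⁻¹ *ᵥ f
  have hdot : ∀ ω, f ⬝ᵥ (K + σ ^ 2 • 1)⁻¹ *ᵥ (fun t => ε t ω) = c ⬝ᵥ fun t => ε t ω :=
    fun ω => hM.isHermitian.inv.dotProduct_mulVec_comm _ _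
  calc ∫ ω, exp (ρ * (f ⬝ᵥ (K + σ ^ 2 • 1)⁻¹ *ᵥ fun t => ε t ω)) ∂P
      = mgf (fun ω => c ⬝ᵥ fun t => ε t ω) P ρ := by simp only [hdot, mgf]
    _ ≤ exp (ρ ^ 2 * (σ ^ 2 * (c ⬝ᵥ c)) / 2) := hindep.mgf_dotProduct_le hmeas hsub c ρ
    _ ≤ exp (ρ ^ 2 * (f ⬝ᵥ K⁻¹ *ᵥ f) / 2) := by
        gcongr
        exact hK.mul_dotProduct_self_inv_add_smul_one_mulVec_le (sq_nonneg σ) f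

/-- For symmetric positive definite `K`, `f ∈ ℝ^T`, `σ > 0`, and independent
`σ`-sub-Gaussian `ε_1, …, ε_T`, the random variable `fᵀ (K + σ²I)⁻¹ ε` is
`(fᵀ K⁻¹ f)^{1/2}`-sub-Gaussian. -/
theorem subGaussian_quadratic_smoothed
    {Ω : Type*} [MeasurableSpace Ω] (P : Measure Ω) [IsProbabilityMeasure P]
    (T : ℕ) (K : Matrix (Fin T) (Fin T) ℝ) (hK : K.PosDef)
    (f : Fin T → ℝ) (σ : ℝ) (hσ : 0 < σ)
    (ε : Fin T → Ω → ℝ) (hmeas : ∀ t, Measurable (ε t))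
    (hindep : iIndepFun ε P)
    (hsub : ∀ t, ∀ ρ : ℝ, ∫ ω, Real.exp (ρ * ε t ω) ∂P ≤ Real.exp (ρ ^ 2 * σ ^ 2 / 2)) :
    ∀ ρ : ℝ, ∫ ω, Real.exp (ρ * (f ⬝ᵥ (K + σ ^ 2 • 1)⁻¹.mulVec (fun t => ε t ω))) ∂P ≤
      Real.exp (ρ ^ 2 * (f ⬝ᵥ K⁻¹.mulVec f) / 2) :=
  subGaussian_quadratic_smoothed_general P T K hK f σ ε hmeas hindep hsub
end

section
/- Let K be a T×T real symmetric positive semidefinite matrix, σ > 0, and set Λ = σ^{−2} I − (K + σ² I)^{−1}. Then: (i) Λ is symmetric positive semidefinite and every eigenvalue of Λ lies in the interval [0, σ^{−2}], so that the operator norm of Λ is at most σ^{−2}; (ii) tr(Λ) ≤ σ^{−2} log det(I + σ^{−2} K); (iii) tr(Λ²) ≤ σ^{−4} log det(I + σ^{−2} K). -/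
open Matrix

/-!
In the continuous functional calculus of `K`, `Λ = g(K)` with `g(x) = σ⁻² - (x + σ²)⁻¹`, so
everything reduces to the eigenvalues `d ≥ 0` of `K`. There `0 ≤ g(d) ≤ σ⁻²`, and the inequality
`1 - y⁻¹ ≤ log y` at `y = 1 + σ⁻² d` gives `g(d) ≤ σ⁻² log (1 + σ⁻² d)`, hence also
`g(d)² ≤ σ⁻² g(d) ≤ σ⁻⁴ log (1 + σ⁻² d)`. Summing over the eigenvalues yields the trace bounds,
since `log det (I + σ⁻² K) = ∑ log (1 + σ⁻² d)`.
-/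

open scoped MatrixOrder

namespace Matrix

section Hermitian

variable {𝕜 n : Type*} [RCLike 𝕜] [Fintype n] [DecidableEq n] {A : Matrix n n 𝕜}

theorem IsHermitian.trace_cfc (hA : A.IsHermitian) (f : ℝ → ℝ) :
    (cfc f A).trace = ∑ i, (f (hA.eigenvalues i) : 𝕜) := by
  rw [hA.cfc_eq, IsHermitian.cfc, Unitary.conjStarAlgAut_apply, trace_mul_cycle,
    Unitary.coe_star_mul_self, one_mul, trace_diagonal]
  rfl

theorem IsHermitian.det_cfc (hA : A.IsHermitian) (f : ℝ → ℝ) :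
    (cfc f A).det = ∏ i, (f (hA.eigenvalues i) : 𝕜) := by
  rw [hA.cfc_eq, IsHermitian.cfc, Unitary.conjStarAlgAut_apply, det_mul_comm, ← mul_assoc,
    Unitary.coe_star_mul_self, one_mul, det_diagonal]
  rfl

theorem IsHermitian.one_add_smul_eq_cfc (hA : A.IsHermitian) (c : ℝ) :
    1 + c • A = cfc (fun x => 1 + c * x) A := by
  rw [cfc_const_add 1 (c * ·) A (by fun_prop) hA.isSelfAdjoint,
    cfc_const_mul_id c A hA.isSelfAdjoint, map_one]

end Hermitian

section Real

variable {n : Type*} [Fintype n] [DecidableEq n]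

theorem dotProduct_mulVec_le_of_le_algebraMap {M : Matrix n n ℝ} {c : ℝ}
    (hM : M ≤ algebraMap ℝ _ c) (v : n → ℝ) : v ⬝ᵥ M *ᵥ v ≤ c * (v ⬝ᵥ v) := by
  simpa only [star_trivial, Algebra.algebraMap_eq_smul_one, sub_mulVec, smul_mulVec, one_mulVec,
    dotProduct_sub, dotProduct_smul, smul_eq_mul, sub_nonneg] using
    (le_iff.mp hM).dotProduct_mulVec_nonneg v

theorem eigenvalue_mem_Icc_of_nonneg_of_le_algebraMap {M : Matrix n n ℝ} {c t : ℝ} {v : n → ℝ}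
    (hM₀ : 0 ≤ M) (hMc : M ≤ algebraMap ℝ _ c) (hv : v ≠ 0) (hMv : M *ᵥ v = t • v) :
    t ∈ Set.Icc 0 c := by
  have hvv : 0 < v ⬝ᵥ v := by simpa using dotProduct_star_self_pos_iff.mpr hv
  have hquad : v ⬝ᵥ M *ᵥ v = t * (v ⬝ᵥ v) := by rw [hMv, dotProduct_smul, smul_eq_mul]
  have hlo := (nonneg_iff_posSemidef.mp hM₀).dotProduct_mulVec_nonneg v
  have hhi := dotProduct_mulVec_le_of_le_algebraMap hMc v
  rw [star_trivial, hquad] at hlo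
  rw [hquad] at hhi
  exact ⟨nonneg_of_mul_nonneg_left hlo hvv, le_of_mul_le_mul_right hhi hvv⟩

variable {K : Matrix n n ℝ}

theorem PosSemidef.inv_add_smul_one_eq_cfc (hK : K.PosSemidef) {s : ℝ} (hs : 0 < s) :
    (K + s • 1)⁻¹ = cfc (fun x => (x + s)⁻¹) K := by
  have hne : ∀ x ∈ spectrum ℝ K, x + s ≠ 0 := fun x hx => by
    linarith [spectrum_nonneg_of_nonneg hK.nonneg hx]
  rw [cfc_inv (fun x => x + s) K hne (K.finite_real_spectrum.continuousOn _),
    cfc_add_const s (fun x => x) K, cfc_id' ℝ K, Algebra.algebraMap_eq_smul_one,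
    nonsing_inv_eq_ringInverse]

theorem PosSemidef.log_det_one_add_smul (hK : K.PosSemidef) {c : ℝ} (hc : 0 ≤ c) :
    Real.log (1 + c • K).det = ∑ i, Real.log (1 + c * hK.isHermitian.eigenvalues i) := by
  rw [hK.isHermitian.one_add_smul_eq_cfc, hK.isHermitian.det_cfc]
  exact Real.log_prod fun i _ => by
    have := hK.eigenvalues_nonneg i
    positivity

theorem PosSemidef.trace_cfc_le_mul_log_det (hK : K.PosSemidef) {f : ℝ → ℝ} {a c : ℝ}
    (hc : 0 ≤ c) (hf : ∀ x, 0 ≤ x → f x ≤ a * Real.log (1 + c * x)) :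
    (cfc f K).trace ≤ a * Real.log (1 + c • K).det := by
  rw [hK.isHermitian.trace_cfc, hK.log_det_one_add_smul hc, Finset.mul_sum]
  exact Finset.sum_le_sum fun i _ => hf _ (hK.eigenvalues_nonneg i)

end Real

end Matrix

theorem inv_sub_inv_add_le_inv_mul_log {s x : ℝ} (hs : 0 < s) (hxs : 0 < x + s) :
    s⁻¹ - (x + s)⁻¹ ≤ s⁻¹ * Real.log (1 + s⁻¹ * x) := by
  have hy : 1 + s⁻¹ * x = (x + s) / s := by field_simp; ring
  calc s⁻¹ - (x + s)⁻¹ = s⁻¹ * (1 - (1 + s⁻¹ * x)⁻¹) := by rw [hy, inv_div]; field_simp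
    _ ≤ s⁻¹ * Real.log (1 + s⁻¹ * x) := by
      gcongr
      exact Real.one_sub_inv_le_log_of_pos (hy ▸ by positivity)

theorem sq_inv_sub_inv_add_le_inv_sq_mul_log {s x : ℝ} (hs : 0 < s) (hx : 0 ≤ x) :
    (s⁻¹ - (x + s)⁻¹) ^ 2 ≤ (s⁻¹) ^ 2 * Real.log (1 + s⁻¹ * x) := by
  have h₀ : 0 ≤ s⁻¹ - (x + s)⁻¹ := sub_nonneg.mpr (inv_anti₀ hs (by linarith))
  have h₁ : s⁻¹ - (x + s)⁻¹ ≤ s⁻¹ := sub_le_self _ (inv_nonneg.mpr (by linarith))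
  calc (s⁻¹ - (x + s)⁻¹) ^ 2 ≤ s⁻¹ * (s⁻¹ - (x + s)⁻¹) := by
        rw [sq]; exact mul_le_mul_of_nonneg_right h₁ h₀
    _ ≤ s⁻¹ * (s⁻¹ * Real.log (1 + s⁻¹ * x)) := by
        gcongr; exact inv_sub_inv_add_le_inv_mul_log hs (by linarith)
    _ = (s⁻¹) ^ 2 * Real.log (1 + s⁻¹ * x) := by ring

/-- For `K` symmetric PSD and `σ > 0`, setting
`Λ = σ⁻² I − (K + σ² I)⁻¹`: (i) `Λ` is symmetric PSD with all eigenvalues in `[0, σ⁻²]`, so its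
operator norm is at most `σ⁻²` (expressed via the quadratic form);
(ii) `tr(Λ) ≤ σ⁻² log det(I + σ⁻² K)`; (iii) `tr(Λ²) ≤ σ⁻⁴ log det(I + σ⁻² K)`. -/
theorem lambda_matrix_bounds
    (T : ℕ) (K : Matrix (Fin T) (Fin T) ℝ) (hK : K.PosSemidef)
    (σ : ℝ) (hσ : 0 < σ) :
    let Λ : Matrix (Fin T) (Fin T) ℝ := (σ ^ 2)⁻¹ • 1 - (K + σ ^ 2 • 1)⁻¹
    Λ.PosSemidef ∧
      (∀ (t : ℝ) (v : Fin T → ℝ), v ≠ 0 → Λ.mulVec v = t • v → 0 ≤ t ∧ t ≤ (σ ^ 2)⁻¹) ∧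
      (∀ v : Fin T → ℝ, v ⬝ᵥ Λ.mulVec v ≤ (σ ^ 2)⁻¹ * (v ⬝ᵥ v)) ∧
      Λ.trace ≤ (σ ^ 2)⁻¹ * Real.log ((1 + (σ ^ 2)⁻¹ • K).det) ∧
      (Λ * Λ).trace ≤ ((σ ^ 2)⁻¹) ^ 2 * Real.log ((1 + (σ ^ 2)⁻¹ • K).det) := by
  intro Λ
  have hs : 0 < σ ^ 2 := by positivity
  have hcont (f : ℝ → ℝ) : ContinuousOn f (spectrum ℝ K) := K.finite_real_spectrum.continuousOn f
  have hspec : ∀ x ∈ spectrum ℝ K, 0 ≤ x := fun x hx => spectrum_nonneg_of_nonneg hK.nonneg hx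
  have hΛ : Λ = cfc (fun x => (σ ^ 2)⁻¹ - (x + σ ^ 2)⁻¹) K := by
    rw [cfc_sub _ _ K (hcont _) (hcont _), cfc_const _ K, ← hK.inv_add_smul_one_eq_cfc hs,
      Algebra.algebraMap_eq_smul_one]
  have hΛ₀ : 0 ≤ Λ := hΛ ▸ cfc_nonneg fun x hx =>
    sub_nonneg.mpr (inv_anti₀ hs (le_add_of_nonneg_left (hspec x hx)))
  have hΛ₁ : Λ ≤ algebraMap ℝ _ (σ ^ 2)⁻¹ := hΛ ▸ cfc_le_algebraMap _ _ K
    (fun x hx => sub_le_self _ (inv_nonneg.mpr (by linarith [hspec x hx]))) (hcont _)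
  refine ⟨nonneg_iff_posSemidef.mp hΛ₀,
    fun t v hv hΛv => eigenvalue_mem_Icc_of_nonneg_of_le_algebraMap hΛ₀ hΛ₁ hv hΛv,
    dotProduct_mulVec_le_of_le_algebraMap hΛ₁, ?_, ?_⟩
  · rw [hΛ]
    exact hK.trace_cfc_le_mul_log_det (by positivity) fun x hx =>
      inv_sub_inv_add_le_inv_mul_log hs (by positivity)
  · rw [hΛ, ← cfc_mul _ _ K (hcont _) (hcont _)]
    exact hK.trace_cfc_le_mul_log_det (by positivity) fun x hx => by
      simpa only [sq] using sq_inv_sub_inv_add_le_inv_sq_mul_log hs hx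
end

section
/- Let K be a T×T real symmetric positive semidefinite matrix and σ > 0. For 1 ≤ t ≤ T, define the posterior variance s_t² = K_{t,t} − k_tᵀ (K_{t−1} + σ² I)^{−1} k_t. Then det(K + σ² I) = Π_{t=1}^T (σ² + s_t²); equivalently, (1/2) log det(I + σ^{−2} K) = (1/2) Σ_{t=1}^T log(1 + σ^{−2} s_t²). -/
/-!
Eliminating the variables of `K + σ² I` one at a time, the pivot at step `t` is the Schur
complement of the leading `t × t` block in the leading `(t+1) × (t+1)` block, and this is exactly
`σ² + s_t²`. Each leading minor is the previous one times its pivot, so the determinant is the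
product of the pivots. Positive definiteness makes all leading minors, hence all pivots, positive,
which gives the logarithmic form.
-/

open Matrix

namespace Matrix

theorem det_fin_succ_eq_det_mul_schurComplement {R : Type*} [CommRing R] {n : ℕ}
    (N : Matrix (Fin (n + 1)) (Fin (n + 1)) R)
    (hA : IsUnit (N.submatrix Fin.castSucc Fin.castSucc).det) :
    N.det = (N.submatrix Fin.castSucc Fin.castSucc).det *
      (N (Fin.last n) (Fin.last n) - (fun j => N (Fin.last n) j.castSucc) ⬝ᵥ
        (N.submatrix Fin.castSucc Fin.castSucc)⁻¹ *ᵥ fun i => N i.castSucc (Fin.last n)) := by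
  set e : Fin n ⊕ Fin 1 ≃ Fin (n + 1) := finSumFinEquiv
  have h11 : (N.submatrix e e).toBlocks₁₁ = N.submatrix Fin.castSucc Fin.castSucc := rfl
  have : Invertible (N.submatrix e e).toBlocks₁₁ := invertibleOfIsUnitDet _ hA
  rw [← det_submatrix_equiv_self e, ← fromBlocks_toBlocks (N.submatrix e e), det_fromBlocks₁₁,
    invOf_eq_nonsing_inv, det_fin_one, h11, Matrix.mul_assoc]
  congr 2

section SchurPivot

variable {R : Type*} [CommRing R] {T : ℕ}

noncomputable def schurPivot (M : Matrix (Fin T) (Fin T) R) (t : Fin T) : R :=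
  M t t - (fun j => M t (Fin.castLE t.isLt.le j)) ⬝ᵥ
    (M.submatrix (Fin.castLE t.isLt.le) (Fin.castLE t.isLt.le))⁻¹ *ᵥ
      fun i => M (Fin.castLE t.isLt.le i) t

theorem det_submatrix_castLE_succ (M : Matrix (Fin T) (Fin T) R) {n : ℕ} (h : n < T)
    (hA : IsUnit (M.submatrix (Fin.castLE h.le) (Fin.castLE h.le)).det) :
    (M.submatrix (Fin.castLE h) (Fin.castLE h)).det =
      (M.submatrix (Fin.castLE h.le) (Fin.castLE h.le)).det * schurPivot M ⟨n, h⟩ :=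
  det_fin_succ_eq_det_mul_schurComplement _ hA

theorem det_submatrix_castLE_eq_prod_schurPivot (M : Matrix (Fin T) (Fin T) R)
    (hM : ∀ t : Fin T, IsUnit (M.submatrix (Fin.castLE t.isLt.le) (Fin.castLE t.isLt.le)).det)
    {n : ℕ} (h : n ≤ T) :
    (M.submatrix (Fin.castLE h) (Fin.castLE h)).det = ∏ i : Fin n, schurPivot M (i.castLE h) := by
  induction n with
  | zero => simp
  | succ n ih =>
    rw [det_submatrix_castLE_succ M h (hM ⟨n, h⟩), ih (Nat.le_of_succ_le h),
      Fin.prod_univ_castSucc]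
    rfl

theorem det_eq_prod_schurPivot (M : Matrix (Fin T) (Fin T) R)
    (hM : ∀ t : Fin T, IsUnit (M.submatrix (Fin.castLE t.isLt.le) (Fin.castLE t.isLt.le)).det) :
    M.det = ∏ t, schurPivot M t := by
  simpa using det_submatrix_castLE_eq_prod_schurPivot M hM le_rfl

end SchurPivot

section PosDef

open scoped ComplexOrder

variable {𝕜 : Type*} [RCLike 𝕜] {T : ℕ} {M : Matrix (Fin T) (Fin T) 𝕜}

theorem PosDef.det_eq_prod_schurPivot (hM : M.PosDef) : M.det = ∏ t, schurPivot M t :=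
  Matrix.det_eq_prod_schurPivot M fun _ =>
    (hM.submatrix (Fin.castLE_injective _)).det_pos.ne'.isUnit

theorem PosDef.schurPivot_pos (hM : M.PosDef) (t : Fin T) : 0 < schurPivot M t := by
  have hlead : ∀ {n} (h : n ≤ T), 0 < (M.submatrix (Fin.castLE h) (Fin.castLE h)).det :=
    fun _ => (hM.submatrix (Fin.castLE_injective _)).det_pos
  have hsucc := det_submatrix_castLE_succ M t.isLt (hlead t.isLt.le).ne'.isUnit
  exact pos_of_mul_pos_right (hsucc ▸ hlead t.isLt) (hlead t.isLt.le).le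

end PosDef

end Matrix

noncomputable def posteriorVariance {R : Type*} [CommRing R] {T : ℕ}
    (K : Matrix (Fin T) (Fin T) R) (v : R) (t : Fin T) : R :=
  K t t - (fun i => K (Fin.castLE t.isLt.le i) t) ⬝ᵥ
    (K.submatrix (Fin.castLE t.isLt.le) (Fin.castLE t.isLt.le) + v • 1)⁻¹ *ᵥ
      fun i => K (Fin.castLE t.isLt.le i) t

theorem Matrix.IsSymm.schurPivot_add_smul_one {R : Type*} [CommRing R] {T : ℕ}
    {K : Matrix (Fin T) (Fin T) R} (hK : K.IsSymm) (v : R) (t : Fin T) :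
    schurPivot (K + v • 1) t = v + posteriorVariance K v t := by
  have hne : ∀ i : Fin t, t ≠ Fin.castLE t.isLt.le i := fun i h =>
    (i.isLt.trans_eq (congrArg Fin.val h)).false
  have hsub : (K + v • 1).submatrix (Fin.castLE t.isLt.le) (Fin.castLE t.isLt.le) =
      K.submatrix (Fin.castLE t.isLt.le) (Fin.castLE t.isLt.le) + v • 1 := by
    ext i j
    simp [one_apply, (Fin.castLE_injective _).eq_iff]
  simp only [schurPivot, posteriorVariance, hsub, add_apply, smul_apply, one_apply_eq,
    one_apply_ne (hne _), one_apply_ne (hne _).symm, hK.apply t, mul_zero, add_zero,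
    smul_eq_mul, mul_one]
  ring

/-- For `K` symmetric PSD and `σ > 0`, with posterior variances
`s_t² = K_{t,t} − k_tᵀ (K_{t−1} + σ²I)⁻¹ k_t` (where `K_{t−1}` is the leading principal
submatrix and `k_t` the corresponding column segment),
`det(K + σ²I) = Π_t (σ² + s_t²)`; equivalently
`(1/2) log det(I + σ⁻²K) = (1/2) Σ_t log(1 + σ⁻² s_t²)`. -/
theorem det_eq_prod_posterior_variances
    (T : ℕ) (K : Matrix (Fin T) (Fin T) ℝ) (hK : K.PosSemidef)
    (σ : ℝ) (hσ : 0 < σ) :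
    let sub : (t : Fin T) → Matrix (Fin t.val) (Fin t.val) ℝ :=
      fun t => Matrix.of fun i j => K (Fin.castLE t.isLt.le i) (Fin.castLE t.isLt.le j)
    let kvec : (t : Fin T) → (Fin t.val → ℝ) :=
      fun t i => K (Fin.castLE t.isLt.le i) t
    let sSq : Fin T → ℝ :=
      fun t => K t t - kvec t ⬝ᵥ (sub t + σ ^ 2 • 1)⁻¹.mulVec (kvec t)
    (K + σ ^ 2 • 1).det = ∏ t, (σ ^ 2 + sSq t) ∧
      (1 / 2) * Real.log ((1 + (σ ^ 2)⁻¹ • K).det) =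
        (1 / 2) * ∑ t, Real.log (1 + (σ ^ 2)⁻¹ * sSq t) := by
  intro sub kvec sSq
  have hσ2 : 0 < σ ^ 2 := by positivity
  have hM : (K + σ ^ 2 • 1).PosDef := PosDef.posSemidef_add hK (PosDef.one.smul hσ2)
  have hpivot (t : Fin T) : schurPivot (K + σ ^ 2 • 1) t = σ ^ 2 + sSq t :=
    (isHermitian_iff_isSymm.mp hK.isHermitian).schurPivot_add_smul_one _ t
  have hdet : (K + σ ^ 2 • 1).det = ∏ t, (σ ^ 2 + sSq t) := by
    simpa only [hpivot] using hM.det_eq_prod_schurPivot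
  have hfactor (t : Fin T) : 1 + (σ ^ 2)⁻¹ * sSq t = (σ ^ 2)⁻¹ * (σ ^ 2 + sSq t) := by
    rw [mul_add, inv_mul_cancel₀ hσ2.ne']
  have hdet_normalized : (1 + (σ ^ 2)⁻¹ • K).det = ∏ t, (1 + (σ ^ 2)⁻¹ * sSq t) := by
    calc (1 + (σ ^ 2)⁻¹ • K).det = ((σ ^ 2)⁻¹ • (K + σ ^ 2 • 1)).det := by
          rw [smul_add, smul_smul, inv_mul_cancel₀ hσ2.ne', one_smul, add_comm]
      _ = ∏ t, (σ ^ 2)⁻¹ * (σ ^ 2 + sSq t) := by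
          rw [det_smul, hdet, Finset.prod_mul_distrib, Finset.prod_const, Finset.card_univ]
      _ = ∏ t, (1 + (σ ^ 2)⁻¹ * sSq t) := by simp only [hfactor]
  refine ⟨hdet, ?_⟩
  rw [hdet_normalized, Real.log_prod fun t _ => ?_]
  rw [hfactor, ← hpivot]
  exact mul_ne_zero (inv_ne_zero hσ2.ne') (hM.schurPivot_pos t).ne'
end

section
/- Let d ≥ 1, σ > 0, let X ⊆ ℝ^d, let θ, θ' ∈ ℝ^d satisfy 0 < θ'_i ≤ θ_i for all i, and for positive lengthscales θ define the squared-exponential kernel k_θ(x, y) = exp(−(1/2) Σ_{i=1}^d (x_i − y_i)² / θ_i²). For T ≥ 1 define the maximum information gain γ_T^θ = sup over all subsets A ⊆ X of cardinality T of (1/2) log det(I + σ^{−2} K_A^θ), where K_A^θ is the T×T Gram matrix (k_θ(a, a'))_{a, a' ∈ A}. Then γ_T^θ ≤ γ_T^{θ'}. -/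
/-!
Shrinking the lengthscales multiplies the kernel entrywise by another squared-exponential kernel:
`k_{θ'} = k_θ · k_ρ` with inverse squared lengthscales `ρ⁻² = θ'⁻² - θ⁻² ≥ 0`. Gram matrices of
`k_ρ` are positive semidefinite (as `exp` of a Gram matrix, conjugated by a diagonal) and have unit
diagonal, so `I + σ⁻² K^{θ'} = (I + σ⁻² K^θ) ⊙ K^ρ`, and Oppenheim's inequality
`det A · ∏ Bᵢᵢ ≤ det (A ⊙ B)` gives `det (I + σ⁻² K^θ) ≤ det (I + σ⁻² K^{θ'})` for every choice
of points. Taking suprema, the bound `det ≤ T! (1 + σ⁻²)ᵀ` keeps the sets bounded.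
-/

open Matrix

namespace Matrix

section EntrywiseFunctions

variable {n : Type*} [Fintype n]

theorem PosSemidef.map_pow {A : Matrix n n ℝ} (hA : A.PosSemidef) (p : ℕ) :
    (A.map (· ^ p)).PosSemidef := by
  induction p with
  | zero => convert posSemidef_vecMulVec_self_star (1 : n → ℝ) using 1; ext; simp [vecMulVec]
  | succ p ih =>
    rw [show A.map (· ^ (p + 1)) = A.map (· ^ p) ⊙ A by ext; simp [pow_succ]]
    exact ih.hadamard hA

theorem PosSemidef.map_exp {A : Matrix n n ℝ} (hA : A.PosSemidef) :
    (A.map Real.exp).PosSemidef := by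
  refine .of_dotProduct_mulVec_nonneg (hA.1.map _ fun _ => rfl) fun x => ?_
  have hexp (t : ℝ) : HasSum (fun p : ℕ => t ^ p / p.factorial) (Real.exp t) := by
    simpa [Real.exp_eq_exp_ℝ] using NormedSpace.expSeries_div_hasSum_exp (𝔸 := ℝ) t
  have hform : HasSum (fun p : ℕ => star x ⬝ᵥ ((p.factorial : ℝ)⁻¹ • A.map (· ^ p)) *ᵥ x)
      (star x ⬝ᵥ A.map Real.exp *ᵥ x) := by
    simp only [dotProduct, mulVec, smul_apply, map_apply, smul_eq_mul]
    exact hasSum_sum fun i _ => (hasSum_sum fun j _ =>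
      by simpa [div_eq_inv_mul, mul_assoc] using (hexp (A i j)).mul_right (x j)).mul_left _
  exact hform.nonneg fun p =>
    ((hA.map_pow p).smul (by positivity : (0 : ℝ) ≤ (p.factorial : ℝ)⁻¹)).dotProduct_mulVec_nonneg x

theorem posSemidef_exp_neg_half_norm_sub_sq [DecidableEq n] {E : Type*} [NormedAddCommGroup E]
    [InnerProductSpace ℝ E] (v : n → E) :
    (of fun i j => Real.exp (-(1 / 2) * ‖v i - v j‖ ^ 2)).PosSemidef := by
  set q : n → ℝ := fun i => Real.exp (-(1 / 2) * ‖v i‖ ^ 2)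
  have hfactor : (of fun i j => Real.exp (-(1 / 2) * ‖v i - v j‖ ^ 2))
      = diagonal q * (gram ℝ v).map Real.exp * (diagonal q)ᴴ := by
    ext i j
    simp only [of_apply, diagonal_conjTranspose, mul_diagonal, diagonal_mul, map_apply, gram_apply,
      q, star_trivial, ← Real.exp_add, norm_sub_sq_real]
    ring_nf
  rw [hfactor]
  exact (posSemidef_gram ℝ v).map_exp.mul_mul_conjTranspose_same _

end EntrywiseFunctions

section Determinants

variable {n : Type*} [Fintype n] [DecidableEq n]

open scoped Pointwise in
theorem PosSemidef.one_le_det_one_add {A : Matrix n n ℝ} (hA : A.PosSemidef) :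
    1 ≤ (1 + A).det := by
  have hH : (1 + A).IsHermitian := isHermitian_one.add hA.1
  rw [hH.det_eq_prod_eigenvalues]
  refine Finset.one_le_prod fun i _ => ?_
  have hspec : spectrum ℝ (1 + A) = ({1} : Set ℝ) + spectrum ℝ A := by
    rw [spectrum.singleton_add_eq, map_one]
  obtain ⟨_, rfl, μ, hμ, hsum⟩ := hspec ▸ hH.eigenvalues_mem_spectrum_real i
  simpa [← hsum] using (posSemidef_iff_isHermitian_and_spectrum_nonneg.1 hA).2 hμ

open scoped MatrixOrder in
theorem PosSemidef.det_le_det_add {A B : Matrix n n ℝ} (hA : A.PosSemidef) (hB : B.PosSemidef) :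
    A.det ≤ (A + B).det := by
  rcases eq_or_ne A.det 0 with h | h
  · exact h ▸ (hA.add hB).det_nonneg
  obtain ⟨C, rfl⟩ := CStarAlgebra.nonneg_iff_eq_star_mul_self.1 hB.nonneg
  have hC : (1 + C * A⁻¹ * Cᴴ).det ≥ 1 :=
    ((hA.posDef_iff_det_ne_zero.2 h).inv.posSemidef.mul_mul_conjTranspose_same C).one_le_det_one_add
  rw [star_eq_conjTranspose, det_add_mul _ _ (isUnit_iff_ne_zero.2 h)]
  exact le_mul_of_one_le_right hA.det_nonneg hC

theorem det_one_add_smul_le {c : ℝ} (hc : 0 ≤ c) {K : Matrix n n ℝ} (hK : ∀ i j, |K i j| ≤ 1) :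
    (1 + c • K).det ≤ (Fintype.card n).factorial * (1 + c) ^ Fintype.card n := by
  have hentry (i j : n) : |(1 + c • K) i j| ≤ 1 + c := by
    have hone : |(1 : Matrix n n ℝ) i j| ≤ 1 := by rw [one_apply]; split_ifs <;> simp
    calc |(1 + c • K) i j| ≤ |(1 : Matrix n n ℝ) i j| + c * |K i j| := by
          simpa [abs_mul, abs_of_nonneg hc] using abs_add_le ((1 : Matrix n n ℝ) i j) (c * K i j)
      _ ≤ 1 + c := by gcongr; exact mul_le_of_le_one_right hc (hK i j)
  simpa using (le_abs_self _).trans (det_le (abv := AbsoluteValue.abs) hentry)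

end Determinants

section Oppenheim

variable {n R : Type*} [Field R]

def schurComplement₂₂ (M : Matrix (n ⊕ Fin 1) (n ⊕ Fin 1) R) : Matrix n n R :=
  of fun i j =>
    M (.inl i) (.inl j) - M (.inl i) (.inr 0) * M (.inr 0) (.inl j) / M (.inr 0) (.inr 0)

theorem toBlocks₁₁_sub_mul_inv_mul_eq_schurComplement₂₂ (M : Matrix (n ⊕ Fin 1) (n ⊕ Fin 1) R) :
    M.toBlocks₁₁ - M.toBlocks₁₂ * M.toBlocks₂₂⁻¹ * M.toBlocks₂₁ = schurComplement₂₂ M := by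
  ext i j
  simp [schurComplement₂₂, toBlocks₁₁, toBlocks₁₂, toBlocks₂₁, toBlocks₂₂, mul_apply,
    div_eq_mul_inv]
  ring

theorem schurComplement₂₂_hadamard (A B : Matrix (n ⊕ Fin 1) (n ⊕ Fin 1) R)
    (hA : A (.inr 0) (.inr 0) ≠ 0) (hB : B (.inr 0) (.inr 0) ≠ 0) :
    schurComplement₂₂ (A ⊙ B) = schurComplement₂₂ A ⊙ B.toBlocks₁₁ + (A (.inr 0) (.inr 0))⁻¹ •
      (vecMulVec (fun i => A (.inl i) (.inr 0)) (fun j => A (.inr 0) (.inl j)) ⊙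
        schurComplement₂₂ B) := by
  ext i j
  simp only [schurComplement₂₂, hadamard_apply, of_apply, add_apply, smul_apply, vecMulVec_apply,
    toBlocks₁₁, smul_eq_mul]
  field_simp
  ring

variable [Fintype n]

theorem PosSemidef.schurComplement₂₂ {M : Matrix (n ⊕ Fin 1) (n ⊕ Fin 1) ℝ} (hM : M.PosSemidef)
    (h : 0 < M (.inr 0) (.inr 0)) : (schurComplement₂₂ M).PosSemidef := by
  have h₂₂ : M.toBlocks₂₂.PosDef := by
    rw [show M.toBlocks₂₂ = diagonal fun _ => M (.inr 0) (.inr 0) by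
      ext i j; fin_cases i; fin_cases j; rfl]
    exact posDef_diagonal_iff.2 fun _ => h
  let : Invertible M.toBlocks₂₂ := h₂₂.isUnit.invertible
  have h₂₁ : M.toBlocks₁₂ᴴ = M.toBlocks₂₁ := by
    ext i j
    exact hM.1.apply (.inr i) (.inl j)
  rw [← toBlocks₁₁_sub_mul_inv_mul_eq_schurComplement₂₂, ← h₂₁, ← PosDef.fromBlocks₂₂ _ _ h₂₂, h₂₁,
    fromBlocks_toBlocks]
  exact hM

variable [DecidableEq n]

theorem det_eq_mul_det_schurComplement₂₂ (M : Matrix (n ⊕ Fin 1) (n ⊕ Fin 1) R)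
    (h : M (.inr 0) (.inr 0) ≠ 0) : M.det = M (.inr 0) (.inr 0) * (schurComplement₂₂ M).det := by
  let : Invertible M.toBlocks₂₂ :=
    invertibleOfIsUnitDet _ (by simpa [det_unique, toBlocks₂₂] using h)
  conv_lhs => rw [← fromBlocks_toBlocks M]
  rw [det_fromBlocks₂₂, invOf_eq_nonsing_inv, toBlocks₁₁_sub_mul_inv_mul_eq_schurComplement₂₂,
    det_unique]
  rfl

def OppenheimInequality (n : Type*) [Fintype n] [DecidableEq n] : Prop :=
  ∀ A B : Matrix n n ℝ, A.PosDef → B.PosSemidef → A.det * ∏ i, B i i ≤ (A ⊙ B).det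

theorem OppenheimInequality.of_equiv {m : Type*} [Fintype m] [DecidableEq m] (e : m ≃ n)
    (h : OppenheimInequality m) : OppenheimInequality n := fun A B hA hB => by
  simpa [det_submatrix_equiv_self, ← submatrix_hadamard, e.prod_comp fun i => B i i] using
    h (A.submatrix e e) (B.submatrix e e) (hA.submatrix e.injective) (hB.submatrix e)

theorem OppenheimInequality.sum_fin_one (ih : OppenheimInequality n) :
    OppenheimInequality (n ⊕ Fin 1) := by
  intro A B hA hB
  set a := A (.inr 0) (.inr 0)
  set b := B (.inr 0) (.inr 0)
  have ha : 0 < a := hA.diag_pos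
  have hprod : ∏ i, B i i = (∏ i, B.toBlocks₁₁ i i) * b := by
    simp [Fintype.prod_sum_type, toBlocks₁₁, b]
  rcases (hB.diag_nonneg : 0 ≤ b).eq_or_lt with hb | hb
  · rw [hprod, show b = 0 from hb.symm, mul_zero, mul_zero]
    exact (hA.posSemidef.hadamard hB).det_nonneg
  have hSA : (schurComplement₂₂ A).PosDef := by
    refine (hA.posSemidef.schurComplement₂₂ ha).posDef_iff_det_ne_zero.2 fun h => ?_
    have := hA.det_pos
    rw [det_eq_mul_det_schurComplement₂₂ A ha.ne', h, mul_zero] at this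
    exact this.false
  have hB₁₁ : B.toBlocks₁₁.PosSemidef := hB.submatrix _
  have hrank : (a⁻¹ • (vecMulVec (fun i => A (.inl i) (.inr 0)) (fun j => A (.inr 0) (.inl j)) ⊙
      schurComplement₂₂ B)).PosSemidef := by
    have hrow : (fun j => A (.inr 0) (.inl j)) = star fun i => A (.inl i) (.inr 0) :=
      funext fun j => (hA.1.apply _ _).symm
    rw [hrow]
    exact ((posSemidef_vecMulVec_self_star _).hadamard (hB.schurComplement₂₂ hb)).smul
      (inv_nonneg.2 ha.le)
  calc A.det * ∏ i, B i i = a * b * ((schurComplement₂₂ A).det * ∏ i, B.toBlocks₁₁ i i) := by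
        rw [det_eq_mul_det_schurComplement₂₂ A ha.ne', hprod]; ring
    _ ≤ a * b * (schurComplement₂₂ A ⊙ B.toBlocks₁₁).det := by
        gcongr; exact ih _ _ hSA hB₁₁
    _ ≤ a * b * (schurComplement₂₂ (A ⊙ B)).det := by
        gcongr
        rw [schurComplement₂₂_hadamard A B ha.ne' hb.ne']
        exact (hSA.posSemidef.hadamard hB₁₁).det_le_det_add hrank
    _ = (A ⊙ B).det := (det_eq_mul_det_schurComplement₂₂ (A ⊙ B) (mul_pos ha hb).ne').symm

theorem PosDef.det_mul_prod_diag_le_det_hadamard {A B : Matrix n n ℝ} (hA : A.PosDef)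
    (hB : B.PosSemidef) : A.det * ∏ i, B i i ≤ (A ⊙ B).det := by
  suffices ∀ k, OppenheimInequality (Fin k) from
    (this _).of_equiv (Fintype.equivFin n).symm A B hA hB
  intro k
  induction k with
  | zero => intro A B _ _; simp
  | succ k ih => exact ih.sum_fin_one.of_equiv finSumFinEquiv

end Oppenheim

end Matrix

section SquaredExponential

variable {ι : Type*} [Fintype ι]

/-- The squared-exponential kernel with inverse squared lengthscales `w`: `k_θ = seKernel θ⁻²`. -/
noncomputable def seKernel (w x y : ι → ℝ) : ℝ :=
  Real.exp (-(1 / 2) * ∑ l, w l * (x l - y l) ^ 2)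

@[simp]
theorem seKernel_self (w x : ι → ℝ) : seKernel w x x = 1 := by
  simp [seKernel]

theorem seKernel_add (w w' x y : ι → ℝ) :
    seKernel (w + w') x y = seKernel w x y * seKernel w' x y := by
  simp only [seKernel, ← Real.exp_add, Pi.add_apply, add_mul, Finset.sum_add_distrib]
  ring_nf

theorem abs_seKernel_le_one {w : ι → ℝ} (hw : 0 ≤ w) (x y : ι → ℝ) : |seKernel w x y| ≤ 1 := by
  rw [seKernel, abs_of_pos (Real.exp_pos _)]
  refine Real.exp_le_one_iff.2 (mul_nonpos_of_nonpos_of_nonneg (by norm_num) ?_)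
  exact Finset.sum_nonneg fun l _ => mul_nonneg (hw l) (sq_nonneg _)

variable {n : Type*} [Fintype n] [DecidableEq n]

theorem posSemidef_seKernel {w : ι → ℝ} (hw : 0 ≤ w) (a : n → ι → ℝ) :
    (of fun i j => seKernel w (a i) (a j)).PosSemidef := by
  let v : n → EuclideanSpace ℝ ι := fun i => WithLp.toLp 2 fun l => √(w l) * a i l
  convert posSemidef_exp_neg_half_norm_sub_sq v using 3 with i j
  simp [seKernel, v, EuclideanSpace.norm_sq_eq, mul_pow, Real.sq_sqrt (hw _), ← mul_sub]

theorem posDef_one_add_smul_seKernel {c : ℝ} (hc : 0 ≤ c) {w : ι → ℝ} (hw : 0 ≤ w)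
    (a : n → ι → ℝ) : (1 + c • of fun i j => seKernel w (a i) (a j)).PosDef :=
  PosDef.one.add_posSemidef ((posSemidef_seKernel hw a).smul hc)

theorem det_one_add_smul_seKernel_le {c : ℝ} (hc : 0 ≤ c) {w w' : ι → ℝ} (hw : 0 ≤ w)
    (hww' : w ≤ w') (a : n → ι → ℝ) :
    (1 + c • of fun i j => seKernel w (a i) (a j)).det
      ≤ (1 + c • of fun i j => seKernel w' (a i) (a j)).det := by
  have hmul (x y : ι → ℝ) : seKernel w' x y = seKernel w x y * seKernel (w' - w) x y := by
    rw [← seKernel_add, add_sub_cancel]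
  have hsplit : (1 + c • of fun i j => seKernel w' (a i) (a j)) =
      (1 + c • of fun i j => seKernel w (a i) (a j)) ⊙
        of fun i j => seKernel (w' - w) (a i) (a j) := by
    ext i j
    by_cases h : i = j
    · subst h; simp
    · simp [h, hmul, mul_assoc]
  rw [hsplit]
  simpa using (posDef_one_add_smul_seKernel hc hw a).det_mul_prod_diag_le_det_hadamard
    (posSemidef_seKernel (sub_nonneg.2 hww') a)

end SquaredExponential

theorem csSup_setOf_le_csSup_setOf {α β : Type*} [ConditionallyCompleteLattice β] {P : α → Prop}
    {f g : α → β} (hfg : ∀ a, P a → f a ≤ g a) (hg : BddAbove {y | ∃ a, P a ∧ y = g a}) :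
    sSup {y | ∃ a, P a ∧ y = f a} ≤ sSup {y | ∃ a, P a ∧ y = g a} := by
  by_cases h : ∃ a, P a
  · obtain ⟨a₀, ha₀⟩ := h
    refine csSup_le ⟨f a₀, a₀, ha₀, rfl⟩ ?_
    rintro _ ⟨a, ha, rfl⟩
    exact (hfg a ha).trans (le_csSup hg ⟨a, ha, rfl⟩)
  · push Not at h
    simp [h]

theorem infoGain_mono_in_lengthscale_general
    (d : ℕ) (σ : ℝ) (X : Set (Fin d → ℝ))
    (θ θ' : Fin d → ℝ) (hθ' : ∀ i, 0 < θ' i) (hle : ∀ i, θ' i ≤ θ i)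
    (T : ℕ) :
    let k : (Fin d → ℝ) → (Fin d → ℝ) → (Fin d → ℝ) → ℝ :=
      fun t x y => Real.exp (-(1 / 2) * ∑ i, (x i - y i) ^ 2 / (t i) ^ 2)
    let γ : (Fin d → ℝ) → ℝ := fun t =>
      sSup {g : ℝ | ∃ a : Fin T → (Fin d → ℝ), Function.Injective a ∧ (∀ i, a i ∈ X) ∧
        g = (1 / 2) * Real.log
          ((1 + (σ ^ 2)⁻¹ • Matrix.of fun i j => k t (a i) (a j)).det)}
    γ θ ≤ γ θ' := by
  intro k γ
  let w : (Fin d → ℝ) → Fin d → ℝ := fun t l => (t l ^ 2)⁻¹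
  have hk (t : Fin d → ℝ) : k t = seKernel (w t) := by
    ext x y
    simp [k, seKernel, w, div_eq_inv_mul]
  have hc : 0 ≤ (σ ^ 2)⁻¹ := inv_nonneg.2 (sq_nonneg σ)
  have hw (t : Fin d → ℝ) : 0 ≤ w t := fun l => inv_nonneg.2 (sq_nonneg _)
  have hww' : w θ ≤ w θ' := fun l =>
    inv_anti₀ (pow_pos (hθ' l) 2) (pow_le_pow_left₀ (hθ' l).le (hle l) 2)
  simp only [γ, hk, ← and_assoc]
  refine csSup_setOf_le_csSup_setOf (fun a _ => ?_)
    ⟨1 / 2 * Real.log (T.factorial * (1 + (σ ^ 2)⁻¹) ^ T), ?_⟩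
  · gcongr
    · exact (posDef_one_add_smul_seKernel hc (hw θ) a).det_pos
    · exact det_one_add_smul_seKernel_le hc (hw θ) hww' a
  · rintro _ ⟨a, _, rfl⟩
    gcongr
    · exact (posDef_one_add_smul_seKernel hc (hw θ') a).det_pos
    · simpa using det_one_add_smul_le (K := of fun i j => seKernel (w θ') (a i) (a j)) hc
        fun i j => abs_seKernel_le_one (hw θ') (a i) (a j)

/-- For the squared-exponential kernel with lengthscales `θ`, shrinking the
lengthscales componentwise (`θ' ≤ θ`) can only increase the maximum information gain:
`γ_T^θ ≤ γ_T^{θ'}`. -/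
theorem infoGain_mono_in_lengthscale
    (d : ℕ) (hd : 1 ≤ d) (σ : ℝ) (hσ : 0 < σ) (X : Set (Fin d → ℝ))
    (θ θ' : Fin d → ℝ) (hθ' : ∀ i, 0 < θ' i) (hle : ∀ i, θ' i ≤ θ i)
    (T : ℕ) (hT : 1 ≤ T) :
    let k : (Fin d → ℝ) → (Fin d → ℝ) → (Fin d → ℝ) → ℝ :=
      fun t x y => Real.exp (-(1 / 2) * ∑ i, (x i - y i) ^ 2 / (t i) ^ 2)
    let γ : (Fin d → ℝ) → ℝ := fun t =>
      sSup {g : ℝ | ∃ a : Fin T → (Fin d → ℝ), Function.Injective a ∧ (∀ i, a i ∈ X) ∧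
        g = (1 / 2) * Real.log
          ((1 + (σ ^ 2)⁻¹ • Matrix.of fun i j => k t (a i) (a j)).det)}
    γ θ ≤ γ θ' :=
  infoGain_mono_in_lengthscale_general d σ X θ θ' hθ' hle T
end

section
/- Let K be a T×T real symmetric positive semidefinite matrix with all diagonal entries K_{t,t} ≤ 1, and let σ > 0. For 1 ≤ t ≤ T, define the posterior variance s_t² = K_{t,t} − k_tᵀ (K_{t−1} + σ² I)^{−1} k_t. Then Σ_{t=1}^T s_t² ≤ (2 / log(1 + σ^{−2})) · (1/2) log det(I + σ^{−2} K). -/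
/-!
Splitting off the last row and column of `K_t + σ²I`, the Schur complement of the leading block
`K_{t-1} + σ²I` is `σ² + s_t²`, so `det (K + σ²I) = ∏ₜ (σ² + s_t²)`, i.e.
`log det (I + σ⁻²K) = ∑ₜ log (1 + σ⁻² s_t²)`. Since `0 ≤ s_t² ≤ 1`, concavity of `log` (in the form
of Bernoulli's inequality `(1 + c)^x ≤ 1 + c x`) gives `s_t² log (1 + σ⁻²) ≤ log (1 + σ⁻² s_t²)`.
-/

open Matrix

theorem Real.mul_log_one_add_le_log_one_add_mul {c x : ℝ} (hc : -1 < c) (hx₀ : 0 ≤ x)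
    (hx₁ : x ≤ 1) : x * Real.log (1 + c) ≤ Real.log (1 + c * x) := by
  have hc' : 0 < 1 + c := by linarith
  rw [← Real.log_rpow hc', mul_comm c]
  exact Real.log_le_log (Real.rpow_pos_of_pos hc' x)
    (rpow_one_add_le_one_add_mul_self hc.le hx₀ hx₁)

namespace Matrix

section Blocks

variable {m ι α : Type*} [Fintype m] [DecidableEq m] [Unique ι]

theorem det_fromBlocks_replicateCol [DecidableEq ι] [CommRing α] (A : Matrix m m α)
    [Invertible A] (k k' : m → α) (d : α) :
    (fromBlocks A (replicateCol ι k) (replicateRow ι k') (of fun _ _ => d)).det =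
      A.det * (d - k' ⬝ᵥ A⁻¹ *ᵥ k) := by
  rw [det_fromBlocks₁₁, det_unique (_ - _), invOf_eq_nonsing_inv, sub_apply,
    ← replicateRow_vecMul, replicateRow_mul_replicateCol_apply, dotProduct_mulVec, of_apply]

theorem PosDef.dotProduct_inv_mulVec_le {A : Matrix m m ℝ} (hA : A.PosDef) (k : m → ℝ) (d : ℝ)
    (h : (fromBlocks A (replicateCol ι k) (replicateRow ι k) (of fun _ _ => d)).PosSemidef) :
    k ⬝ᵥ A⁻¹ *ᵥ k ≤ d := by
  have := hA.isUnit.invertible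
  have hSchur := (hA.fromBlocks₁₁ (replicateCol ι k) (of fun _ _ => d)).mp (by simpa using h)
  have := hSchur.diag_nonneg (i := default)
  rw [conjTranspose_replicateCol, star_trivial, sub_apply, ← replicateRow_vecMul,
    replicateRow_mul_replicateCol_apply, ← dotProduct_mulVec, of_apply] at this
  linarith

theorem submatrix_finSumFinEquiv_eq_fromBlocks {n : ℕ}
    (M : Matrix (Fin (n + 1)) (Fin (n + 1)) α) :
    M.submatrix finSumFinEquiv finSumFinEquiv =
      fromBlocks (M.submatrix Fin.castSucc Fin.castSucc)
        (replicateCol (Fin 1) fun i => M i.castSucc (Fin.last n))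
        (replicateRow (Fin 1) fun j => M (Fin.last n) j.castSucc)
        (of fun _ _ => M (Fin.last n) (Fin.last n)) := by
  have hlast (i : Fin 1) : finSumFinEquiv (Sum.inr i : Fin n ⊕ Fin 1) = Fin.last n := by
    rw [Subsingleton.elim i 0]; rfl
  ext (i | i) (j | j) <;> simp [hlast] <;> rfl

end Blocks

/-- `K.posteriorVariance v t` is `s_t²` for the kernel matrix `K` and noise variance `v`. -/
noncomputable def posteriorVariance {m : ℕ} (K : Matrix (Fin m) (Fin m) ℝ) (v : ℝ) (t : Fin m) :
    ℝ :=
  let k : Fin t → ℝ := fun i => K (Fin.castLE t.isLt.le i) t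
  K t t - k ⬝ᵥ (K.submatrix (Fin.castLE t.isLt.le) (Fin.castLE t.isLt.le) + v • 1)⁻¹ *ᵥ k


variable {n : ℕ} {v : ℝ}

theorem posteriorVariance_castSucc (K : Matrix (Fin (n + 1)) (Fin (n + 1)) ℝ) (t : Fin n) :
    K.posteriorVariance v t.castSucc =
      (K.submatrix Fin.castSucc Fin.castSucc).posteriorVariance v t :=
  rfl

theorem posteriorVariance_eq_submatrix_last (K : Matrix (Fin n) (Fin n) ℝ) (t : Fin n) :
    K.posteriorVariance v t =
      (K.submatrix (Fin.castLE t.isLt) (Fin.castLE t.isLt)).posteriorVariance v (Fin.last t) :=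
  rfl

theorem posteriorVariance_last (K : Matrix (Fin (n + 1)) (Fin (n + 1)) ℝ) :
    K.posteriorVariance v (Fin.last n) =
      K (Fin.last n) (Fin.last n) - (fun i => K i.castSucc (Fin.last n)) ⬝ᵥ
        (K.submatrix Fin.castSucc Fin.castSucc + v • 1)⁻¹ *ᵥ
          (fun i => K i.castSucc (Fin.last n)) :=
  rfl

theorem posDef_submatrix_castSucc_add_smul_one {K : Matrix (Fin (n + 1)) (Fin (n + 1)) ℝ}
    (hK : K.PosSemidef) (hv : 0 < v) : (K.submatrix Fin.castSucc Fin.castSucc + v • 1).PosDef :=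
  PosDef.posSemidef_add (hK.submatrix _) (PosDef.one.smul hv)

theorem det_add_smul_one_eq_mul_posteriorVariance {K : Matrix (Fin (n + 1)) (Fin (n + 1)) ℝ}
    (hK : K.PosSemidef) (hv : 0 < v) :
    (K + v • 1).det = (K.submatrix Fin.castSucc Fin.castSucc + v • 1).det *
      (v + K.posteriorVariance v (Fin.last n)) := by
  have := (posDef_submatrix_castSucc_add_smul_one hK hv).isUnit.invertible
  have hsymm (j : Fin n) : K (Fin.last n) j.castSucc = K j.castSucc (Fin.last n) :=
    hK.isHermitian.apply _ _
  have hsub : (K + v • 1).submatrix finSumFinEquiv finSumFinEquiv =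
      K.submatrix finSumFinEquiv finSumFinEquiv +
        v • (1 : Matrix (Fin (n + 1)) _ ℝ).submatrix finSumFinEquiv finSumFinEquiv :=
    rfl
  have hcorner : (of fun _ _ => K (Fin.last n) (Fin.last n)) + v • (1 : Matrix (Fin 1) (Fin 1) ℝ) =
      of fun _ _ => K (Fin.last n) (Fin.last n) + v := by
    ext i j
    simp [Subsingleton.elim i j]
  rw [← det_submatrix_equiv_self finSumFinEquiv, hsub, submatrix_one_equiv,
    submatrix_finSumFinEquiv_eq_fromBlocks, ← fromBlocks_one, fromBlocks_smul, fromBlocks_add]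
  simp only [smul_zero, add_zero]
  rw [hcorner]
  refine (det_fromBlocks_replicateCol _ _ _ _).trans ?_
  rw [funext hsymm, posteriorVariance_last]
  ring

theorem posteriorVariance_last_nonneg {K : Matrix (Fin (n + 1)) (Fin (n + 1)) ℝ}
    (hK : K.PosSemidef) (hv : 0 < v) : 0 ≤ K.posteriorVariance v (Fin.last n) := by
  have hsymm (j : Fin n) : K (Fin.last n) j.castSucc = K j.castSucc (Fin.last n) :=
    hK.isHermitian.apply _ _
  set k : Fin n → ℝ := fun i => K i.castSucc (Fin.last n)
  -- this block matrix is `K + v • diagonal (1, …, 1, 0)`, hence positive semidefinite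
  have hblock : (fromBlocks (K.submatrix Fin.castSucc Fin.castSucc + v • 1)
      (replicateCol (Fin 1) k) (replicateRow (Fin 1) k)
      (of fun _ _ => K (Fin.last n) (Fin.last n))).PosSemidef := by
    have hsplit : fromBlocks (K.submatrix Fin.castSucc Fin.castSucc + v • 1)
        (replicateCol (Fin 1) k) (replicateRow (Fin 1) k)
        (of fun _ _ => K (Fin.last n) (Fin.last n)) =
        K.submatrix finSumFinEquiv finSumFinEquiv + diagonal (Sum.elim (fun _ => v) 0) := by
      rw [submatrix_finSumFinEquiv_eq_fromBlocks, ← fromBlocks_diagonal, fromBlocks_add,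
        funext hsymm]
      simp [smul_one_eq_diagonal, k]
    rw [hsplit]
    refine (hK.submatrix _).add (PosSemidef.diagonal ?_)
    rintro (i | i)
    exacts [hv.le, le_rfl]
  rw [posteriorVariance_last, sub_nonneg]
  exact (posDef_submatrix_castSucc_add_smul_one hK hv).dotProduct_inv_mulVec_le k _ hblock

theorem posteriorVariance_nonneg {K : Matrix (Fin n) (Fin n) ℝ} (hK : K.PosSemidef) (hv : 0 < v)
    (t : Fin n) : 0 ≤ K.posteriorVariance v t := by
  rw [posteriorVariance_eq_submatrix_last]
  exact posteriorVariance_last_nonneg (hK.submatrix _) hv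

theorem posteriorVariance_le_apply {K : Matrix (Fin n) (Fin n) ℝ} (hK : K.PosSemidef)
    (hv : 0 < v) (t : Fin n) : K.posteriorVariance v t ≤ K t t := by
  have hA := (PosDef.posSemidef_add (hK.submatrix (Fin.castLE t.isLt.le))
    (PosDef.one.smul hv)).inv
  have := hA.posSemidef.dotProduct_mulVec_nonneg fun i => K (Fin.castLE t.isLt.le i) t
  rw [star_trivial] at this
  exact sub_le_self _ this

theorem prod_add_posteriorVariance {K : Matrix (Fin n) (Fin n) ℝ} (hK : K.PosSemidef)
    (hv : 0 < v) : ∏ t, (v + K.posteriorVariance v t) = (K + v • 1).det := by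
  induction n with
  | zero => simp
  | succ n ih =>
    rw [Fin.prod_univ_castSucc]
    simp only [posteriorVariance_castSucc]
    rw [ih (hK.submatrix _), det_add_smul_one_eq_mul_posteriorVariance hK hv]

theorem det_one_add_inv_smul_eq_prod {K : Matrix (Fin n) (Fin n) ℝ} (hK : K.PosSemidef)
    (hv : 0 < v) : (1 + v⁻¹ • K).det = ∏ t, (1 + v⁻¹ * K.posteriorVariance v t) := calc
  (1 + v⁻¹ • K).det = (v⁻¹ • (K + v • 1)).det := by
    rw [smul_add, smul_smul, inv_mul_cancel₀ hv.ne', one_smul, add_comm]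
  _ = ∏ t, v⁻¹ * (v + K.posteriorVariance v t) := by
    rw [det_smul, ← prod_add_posteriorVariance hK hv, Finset.prod_mul_distrib,
      Finset.prod_const, Finset.card_univ, Fintype.card_fin]
  _ = ∏ t, (1 + v⁻¹ * K.posteriorVariance v t) := by
    simp only [mul_add, inv_mul_cancel₀ hv.ne']

end Matrix

/-- For `K` symmetric PSD with unit-bounded diagonal and `σ > 0`, the sum of
posterior variances is bounded by `(2 / log(1 + σ⁻²))` times the information gain
`(1/2) log det(I + σ⁻² K)`. -/
theorem sum_posterior_variances_le_infoGain
    (T : ℕ) (K : Matrix (Fin T) (Fin T) ℝ) (hK : K.PosSemidef)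
    (hdiag : ∀ t, K t t ≤ 1) (σ : ℝ) (hσ : 0 < σ) :
    let sub : (t : Fin T) → Matrix (Fin t.val) (Fin t.val) ℝ :=
      fun t => Matrix.of fun i j => K (Fin.castLE t.isLt.le i) (Fin.castLE t.isLt.le j)
    let kvec : (t : Fin T) → (Fin t.val → ℝ) :=
      fun t i => K (Fin.castLE t.isLt.le i) t
    let sSq : Fin T → ℝ :=
      fun t => K t t - kvec t ⬝ᵥ (sub t + σ ^ 2 • 1)⁻¹.mulVec (kvec t)
    ∑ t, sSq t ≤ (2 / Real.log (1 + (σ ^ 2)⁻¹)) *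
      ((1 / 2) * Real.log ((1 + (σ ^ 2)⁻¹ • K).det)) := by
  intro sub kvec sSq
  change ∑ t, K.posteriorVariance (σ ^ 2) t ≤ _
  have hv : 0 < σ ^ 2 := by positivity
  have hvar_nonneg := posteriorVariance_nonneg hK hv
  have hvar_le_one t := (posteriorVariance_le_apply hK hv t).trans (hdiag t)
  have hlog_pos : 0 < Real.log (1 + (σ ^ 2)⁻¹) := Real.log_pos (by simpa using hv)
  have hsum : (∑ t, K.posteriorVariance (σ ^ 2) t) * Real.log (1 + (σ ^ 2)⁻¹) ≤
      Real.log ((1 + (σ ^ 2)⁻¹ • K).det) := calc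
    _ = ∑ t, K.posteriorVariance (σ ^ 2) t * Real.log (1 + (σ ^ 2)⁻¹) := Finset.sum_mul ..
    _ ≤ ∑ t, Real.log (1 + (σ ^ 2)⁻¹ * K.posteriorVariance (σ ^ 2) t) :=
      Finset.sum_le_sum fun t _ => Real.mul_log_one_add_le_log_one_add_mul
        (by linarith [inv_pos.2 hv]) (hvar_nonneg t) (hvar_le_one t)
    _ = Real.log ((1 + (σ ^ 2)⁻¹ • K).det) := by
      rw [det_one_add_inv_smul_eq_prod hK hv, Real.log_prod]
      intro t _
      have := hvar_nonneg t
      positivity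
  calc _ ≤ Real.log ((1 + (σ ^ 2)⁻¹ • K).det) / Real.log (1 + (σ ^ 2)⁻¹) :=
        (le_div_iff₀ hlog_pos).2 hsum
    _ = _ := by ring
end

section
/- Let n ≥ 1, σ > 0, let K be an n×n real symmetric positive semidefinite matrix with all diagonal entries K_{i,i} ≤ 1, and let v ∈ ℝⁿ be such that the bordered (n+1)×(n+1) matrix [[K, v], [vᵀ, 1]] is positive semidefinite. Then vᵀ (K + σ² I)^{−1} v ≤ n / (n + σ²); equivalently, the posterior variance 1 − vᵀ (K + σ² I)^{−1} v is at least σ² / (n + σ²). -/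
/-!
Let `w = (K + σ²I)⁻¹ v` and `s = vᵀ w`, so that `s = wᵀ K w + σ² |w|²`. Positivity of the
bordered matrix says that the Schur complement `K - v vᵀ` is positive semidefinite, hence
`s² = (vᵀ w)² ≤ wᵀ K w`. The `2 × 2` minors of `K` give `|K i j| ≤ √(K i i) √(K j j)`, so by
Cauchy–Schwarz `wᵀ K w ≤ tr K · |w|² ≤ n |w|²`. Eliminating `|w|²` yields
`s² (n + σ²) ≤ (wᵀ K w) (n + σ²) ≤ n s`, i.e. `s ≤ n / (n + σ²)`.
-/

open Matrix

namespace Matrix.PosSemidef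

variable {n : Type*} {K : Matrix n n ℝ}

theorem sq_apply_le_mul_apply (hK : K.PosSemidef) (i j : n) : K i j ^ 2 ≤ K i i * K j j := by
  have hdet := (hK.submatrix ![i, j]).det_nonneg
  have hsymm : K j i = K i j := by simpa using hK.isHermitian.apply i j
  simp only [det_fin_two, submatrix_apply, cons_val_zero, cons_val_one] at hdet
  rw [hsymm] at hdet
  linarith

theorem abs_apply_le_sqrt_mul_sqrt (hK : K.PosSemidef) (i j : n) :
    |K i j| ≤ √(K i i) * √(K j j) := by
  rw [← Real.sqrt_mul hK.diag_nonneg]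
  exact Real.abs_le_sqrt (hK.sq_apply_le_mul_apply i j)

theorem dotProduct_mulVec_le_trace_mul [Fintype n] (hK : K.PosSemidef) (x : n → ℝ) :
    x ⬝ᵥ K *ᵥ x ≤ K.trace * (x ⬝ᵥ x) := by
  set u : n → ℝ := fun i => |x i| * √(K i i)
  calc x ⬝ᵥ K *ᵥ x = ∑ i, ∑ j, x i * K i j * x j := by
        simp only [dotProduct, mulVec, Finset.mul_sum, mul_assoc]
    _ ≤ ∑ i, ∑ j, u i * u j := by
        refine Finset.sum_le_sum fun i _ => Finset.sum_le_sum fun j _ => ?_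
        calc x i * K i j * x j ≤ |x i| * |K i j| * |x j| := by
              rw [← abs_mul, ← abs_mul]; exact le_abs_self _
          _ ≤ |x i| * (√(K i i) * √(K j j)) * |x j| := by
              gcongr; exact hK.abs_apply_le_sqrt_mul_sqrt i j
          _ = u i * u j := by ring
    _ = (∑ i, u i) ^ 2 := by rw [sq, Finset.sum_mul_sum]
    _ ≤ (∑ i, K i i) * ∑ i, x i * x i :=
        Finset.sum_sq_le_sum_mul_sum_of_sq_le_mul _ (fun i _ => hK.diag_nonneg)
          (fun i _ => mul_self_nonneg _) fun i _ => by
            rw [mul_pow, sq_abs, Real.sq_sqrt hK.diag_nonneg, sq]; exact (mul_comm _ _).le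
    _ = K.trace * (x ⬝ᵥ x) := rfl

end Matrix.PosSemidef

theorem sq_dotProduct_le_of_fromBlocks_posSemidef {n : Type*} [Fintype n]
    {K : Matrix n n ℝ} {v : n → ℝ}
    (hB : (fromBlocks K (of fun i (_ : Unit) => v i) (of fun (_ : Unit) j => v j)
      (of fun (_ : Unit) (_ : Unit) => (1 : ℝ))).PosSemidef) (x : n → ℝ) :
    (v ⬝ᵥ x) ^ 2 ≤ x ⬝ᵥ K *ᵥ x := by
  have hone : (of fun (_ : Unit) (_ : Unit) => (1 : ℝ)) = 1 := by ext; simp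
  have hrow : (of fun (_ : Unit) j => v j) = (of fun i (_ : Unit) => v i)ᴴ := by ext; simp
  rw [hone, hrow] at hB
  let _ : Invertible (1 : Matrix Unit Unit ℝ) := invertibleOne
  have hschur := ((PosDef.fromBlocks₂₂ K _ PosDef.one).mp hB).dotProduct_mulVec_nonneg x
  simp only [star_trivial, inv_one, Matrix.mul_one, conjTranspose_eq_transpose_of_trivial,
    sub_mulVec, ← mulVec_mulVec, dotProduct_sub, sub_nonneg] at hschur
  have hquad : x ⬝ᵥ (of fun i (_ : Unit) => v i) *ᵥ (of fun i (_ : Unit) => v i)ᵀ *ᵥ x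
      = (v ⬝ᵥ x) ^ 2 := by
    simp [dotProduct, mulVec, sq, Finset.mul_sum, mul_comm, mul_left_comm]
  rwa [hquad] at hschur

theorem le_div_of_sq_le_of_le_mul {s a b N c : ℝ} (hN : 0 ≤ N) (hc : 0 < c)
    (hs : s = a + c * b) (hsa : s ^ 2 ≤ a) (haN : a ≤ N * b) : s ≤ N / (N + c) := by
  rw [le_div_iff₀ (by positivity)]
  have ha : a * (N + c) ≤ N * s := by rw [hs]; nlinarith
  rcases le_or_gt s 0 with hs_nonpos | hs_pos
  · nlinarith
  · nlinarith

theorem dotProduct_inv_mulVec_le_div {n : Type*} [Fintype n] [DecidableEq n]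
    {K : Matrix n n ℝ} (hK : K.PosSemidef) {v : n → ℝ} {N c : ℝ} (hN : 0 ≤ N) (hc : 0 < c)
    (hv : ∀ x, (v ⬝ᵥ x) ^ 2 ≤ x ⬝ᵥ K *ᵥ x) (hKN : ∀ x, x ⬝ᵥ K *ᵥ x ≤ N * (x ⬝ᵥ x)) :
    v ⬝ᵥ (K + c • 1)⁻¹ *ᵥ v ≤ N / (N + c) := by
  have hA : (K + c • 1).PosDef := PosDef.posSemidef_add hK (by simpa using PosDef.one.smul hc)
  set w := (K + c • 1)⁻¹ *ᵥ v
  have hAw : (K + c • 1) *ᵥ w = v := by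
    rw [mulVec_mulVec, mul_nonsing_inv _ hA.det_pos.ne'.isUnit, one_mulVec]
  have hs : v ⬝ᵥ w = w ⬝ᵥ K *ᵥ w + c * (w ⬝ᵥ w) := by
    rw [← hAw, dotProduct_comm, add_mulVec, dotProduct_add, smul_mulVec, one_mulVec,
      dotProduct_smul, smul_eq_mul]
  exact le_div_of_sq_le_of_le_mul hN hc hs (hs ▸ hv w) (hKN w)

theorem posterior_variance_lower_bound_general
    (n : ℕ) (σ : ℝ) (hσ : 0 < σ)
    (K : Matrix (Fin n) (Fin n) ℝ) (hK : K.PosSemidef) (hdiag : ∀ i, K i i ≤ 1)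
    (v : Fin n → ℝ)
    (hB : (Matrix.fromBlocks K
        (Matrix.of fun i (_ : Unit) => v i)
        (Matrix.of fun (_ : Unit) j => v j)
        (Matrix.of fun (_ : Unit) (_ : Unit) => (1 : ℝ))).PosSemidef) :
    v ⬝ᵥ (K + σ ^ 2 • 1)⁻¹.mulVec v ≤ n / (n + σ ^ 2) ∧
      σ ^ 2 / (n + σ ^ 2) ≤ 1 - v ⬝ᵥ (K + σ ^ 2 • 1)⁻¹.mulVec v := by
  have hσ2 : 0 < σ ^ 2 := by positivity
  have htrace : K.trace ≤ n :=
    calc K.trace = ∑ i, K i i := rfl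
      _ ≤ ∑ _ : Fin n, (1 : ℝ) := Finset.sum_le_sum fun i _ => hdiag i
      _ = n := by simp
  have hbound := dotProduct_inv_mulVec_le_div hK n.cast_nonneg hσ2
    (sq_dotProduct_le_of_fromBlocks_posSemidef hB) fun x =>
      (hK.dotProduct_mulVec_le_trace_mul x).trans
        (mul_le_mul_of_nonneg_right htrace (by simpa using dotProduct_self_star_nonneg x))
  refine ⟨hbound, ?_⟩
  have hsplit : (n : ℝ) / (n + σ ^ 2) + σ ^ 2 / (n + σ ^ 2) = 1 := by
    rw [← add_div, div_self (by positivity)]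
  linarith

/-- If `K` is `n×n` symmetric PSD with diagonal entries at most 1, `σ > 0`,
and the bordered matrix `[[K, v], [vᵀ, 1]]` is PSD, then
`vᵀ (K + σ²I)⁻¹ v ≤ n / (n + σ²)`; equivalently the posterior variance
`1 − vᵀ (K + σ²I)⁻¹ v` is at least `σ² / (n + σ²)`. -/
theorem posterior_variance_lower_bound
    (n : ℕ) (hn : 1 ≤ n) (σ : ℝ) (hσ : 0 < σ)
    (K : Matrix (Fin n) (Fin n) ℝ) (hK : K.PosSemidef) (hdiag : ∀ i, K i i ≤ 1)
    (v : Fin n → ℝ)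
    (hB : (Matrix.fromBlocks K
        (Matrix.of fun i (_ : Unit) => v i)
        (Matrix.of fun (_ : Unit) j => v j)
        (Matrix.of fun (_ : Unit) (_ : Unit) => (1 : ℝ))).PosSemidef) :
    v ⬝ᵥ (K + σ ^ 2 • 1)⁻¹.mulVec v ≤ n / (n + σ ^ 2) ∧
      σ ^ 2 / (n + σ ^ 2) ≤ 1 - v ⬝ᵥ (K + σ ^ 2 • 1)⁻¹.mulVec v :=
  posterior_variance_lower_bound_general n σ hσ K hK hdiag v hB
end
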